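/- Let R: L_{2e} → L_{2e} be causal and period preserving with Γ(R) < ∞. Then the RMS gain over T-periodic inputs is bounded by the incremental L_2 gain: sup over T-periodic u₁ ≠ u₂ of ‖ỹ₁ − ỹ₂‖_RMS / ‖u₁ − u₂‖_RMS ≤ Γ(R), where ỹ_i are the T-periodic asymptotic limits of Ru_i. -/

import Mathlib

open MeasureTheory

/-- Truncation operator `P_T` on signals over `[0,∞)`. -/
noncomputable def trunc (T : ℝ) (u : ℝ → ℝ) : ℝ → ℝ := fun t => if t ≤ T then u t else 0

/-- The measure of the time axis `[0,∞)`. -/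
noncomputable def timeMeasure : MeasureTheory.Measure ℝ := volume.restrict (Set.Ici 0)

/-- RMS norm of a `T`-periodic signal: `‖v‖_RMS = (1/√T)·‖v‖_{L₂[0,T]}`. -/
noncomputable def rmsNorm (T : ℝ) (v : ℝ → ℝ) : ℝ :=
  (eLpNorm v 2 (volume.restrict (Set.Ioc 0 T))).toReal / Real.sqrt T

/-! Causality lets the gain bound act on the truncations `P_N uᵢ`, so that
`∫₀ᴺ |Ru₁ - Ru₂|² ≤ Γ² ∫₀ᴺ |u₁ - u₂|²` for every horizon `N`. Take `N = (k + m) T`, where after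
`k` periods the outputs are `ε`-close to their periodic limits. On the last `m` periods the
left side is, up to `O(ε)` terms, `m ‖ỹ₁ - ỹ₂‖²_{L₂(0,T)}`, while the right side is
`(k + m) ‖u₁ - u₂‖²_{L₂(0,T)}`; choosing `m ≥ k / ε` and letting `ε → 0` gives the claim.
Nothing is assumed measurable, so the integrals are lower Lebesgue integrals: the comparison is
done pointwise (Young's inequality) rather than with Minkowski's inequality. -/

open Set ENNReal Filter Topology

lemma setLIntegral_Ioc_comp_add_right (g : ℝ → ℝ≥0∞) (a b c : ℝ) :
    ∫⁻ t in Ioc a b, g (t + c) = ∫⁻ t in Ioc (a + c) (b + c), g t := by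
  rw [← lintegral_indicator measurableSet_Ioc, ← lintegral_indicator measurableSet_Ioc,
    ← lintegral_add_right_eq_self (μ := volume) ((Ioc (a + c) (b + c)).indicator g) c]
  congr 1 with t
  simp only [indicator, mem_Ioc, add_lt_add_iff_right, add_le_add_iff_right]

def PeriodicOnNonneg {α : Type*} (v : ℝ → α) (T : ℝ) : Prop := ∀ t, 0 ≤ t → v (t + T) = v t

namespace PeriodicOnNonneg

variable {α β : Type*} {v : ℝ → α} {T : ℝ}

lemma comp (hv : PeriodicOnNonneg v T) (f : α → β) : PeriodicOnNonneg (fun t => f (v t)) T :=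
  fun t ht => congrArg f (hv t ht)

lemma sub [Sub α] {w : ℝ → α} (hv : PeriodicOnNonneg v T) (hw : PeriodicOnNonneg w T) :
    PeriodicOnNonneg (v - w) T :=
  fun t ht => by simp only [Pi.sub_apply, hv t ht, hw t ht]

lemma add_nat_mul_eq (hv : PeriodicOnNonneg v T) (hT : 0 ≤ T) (n : ℕ) {t : ℝ} (ht : 0 ≤ t) :
    v (t + n * T) = v t := by
  induction n with
  | zero => simp
  | succ n ih =>
    rw [Nat.cast_succ, add_one_mul, ← add_assoc, hv _ (by positivity), ih]

lemma setLIntegral_Ioc_nat_mul {g : ℝ → ℝ≥0∞} (hg : PeriodicOnNonneg g T) (hT : 0 ≤ T)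
    (k m : ℕ) : ∫⁻ t in Ioc (k * T) ((k + m) * T), g t = m * ∫⁻ t in Ioc 0 T, g t := by
  induction m with
  | zero => simp
  | succ m ih =>
    have hshift : ∫⁻ t in Ioc ((k + m) * T) ((k + m + 1) * T), g t = ∫⁻ t in Ioc 0 T, g t := by
      have h := setLIntegral_Ioc_comp_add_right g 0 T ((k + m) * T)
      rw [zero_add, show T + (k + m) * T = ((k : ℝ) + m + 1) * T by ring] at h
      rw [← h]
      refine setLIntegral_congr_fun measurableSet_Ioc fun t ht => ?_
      exact_mod_cast hg.add_nat_mul_eq hT (k + m) ht.1.le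
    rw [Nat.cast_succ, ← add_assoc, ← Ioc_union_Ioc_eq_Ioc (b := (k + m : ℝ) * T)
      (by nlinarith [m.cast_nonneg (α := ℝ)]) (by nlinarith),
      lintegral_union measurableSet_Ioc (Ioc_disjoint_Ioc_of_le le_rfl), ih, hshift]
    push_cast
    ring

end PeriodicOnNonneg

lemma enorm_sq_le_of_abs_sub_le {x y c δ : ℝ} (hδ : 0 < δ) (h : |x - y| ≤ c) :
    ‖x‖ₑ ^ 2 ≤ ENNReal.ofReal (1 + δ) * ‖y‖ₑ ^ 2 + ENNReal.ofReal ((1 + δ⁻¹) * c ^ 2) := by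
  have hreal : x ^ 2 ≤ (1 + δ) * y ^ 2 + (1 + δ⁻¹) * c ^ 2 := by
    have hd : (x - y) ^ 2 ≤ c ^ 2 := sq_le_sq' (abs_le.1 h).1 (abs_le.1 h).2
    have hyoung : 2 * y * (x - y) ≤ δ * y ^ 2 + δ⁻¹ * (x - y) ^ 2 := by
      nlinarith [sq_nonneg (δ * y - (x - y)), mul_inv_cancel₀ hδ.ne', inv_pos.2 hδ]
    nlinarith [inv_pos.2 hδ]
  simp only [Real.enorm_eq_ofReal_abs, ← ENNReal.ofReal_pow (abs_nonneg _), sq_abs]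
  rw [← ENNReal.ofReal_mul (by linarith), ← ENNReal.ofReal_add (by positivity) (by positivity)]
  exact ENNReal.ofReal_le_ofReal hreal

lemma setLIntegral_enorm_sq_le_of_abs_sub_le {w z : ℝ → ℝ} {s : Set ℝ} {c δ : ℝ}
    (hs : MeasurableSet s) (hδ : 0 < δ) (h : ∀ τ ∈ s, |w τ - z τ| ≤ c) :
    ∫⁻ τ in s, ‖w τ‖ₑ ^ 2
      ≤ ENNReal.ofReal (1 + δ) * (∫⁻ τ in s, ‖z τ‖ₑ ^ 2)
        + ENNReal.ofReal ((1 + δ⁻¹) * c ^ 2) * volume s := by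
  calc ∫⁻ τ in s, ‖w τ‖ₑ ^ 2
      ≤ ∫⁻ τ in s, (ENNReal.ofReal (1 + δ) * ‖z τ‖ₑ ^ 2 + ENNReal.ofReal ((1 + δ⁻¹) * c ^ 2)) :=
        setLIntegral_mono' hs fun τ hτ => enorm_sq_le_of_abs_sub_le hδ (h τ hτ)
    _ = _ := by
        rw [lintegral_add_right _ measurable_const, lintegral_const_mul' _ _ ofReal_ne_top,
          setLIntegral_const]

lemma trunc_eq_indicator (N : ℝ) (v : ℝ → ℝ) : trunc N v = (Iic N).indicator v := rfl

lemma trunc_sub (N : ℝ) (v w : ℝ → ℝ) : trunc N (v - w) = trunc N v - trunc N w :=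
  indicator_sub _ _ _

lemma eLpNorm_trunc (N : ℝ) (v : ℝ → ℝ) (p : ℝ≥0∞) :
    eLpNorm (trunc N v) p timeMeasure = eLpNorm v p (volume.restrict (Ioc 0 N)) := by
  rw [trunc_eq_indicator, timeMeasure, eLpNorm_indicator_eq_eLpNorm_restrict measurableSet_Iic,
    Measure.restrict_restrict measurableSet_Iic, Iic_inter_Ici,
    Measure.restrict_congr_set Ioc_ae_eq_Icc]

lemma eLpNorm_two_sq {α : Type*} [MeasurableSpace α] (f : α → ℝ) (μ : Measure α) :
    eLpNorm f 2 μ ^ 2 = ∫⁻ x, ‖f x‖ₑ ^ 2 ∂μ := by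
  simpa using eLpNorm_nnreal_pow_eq_lintegral (f := f) (μ := μ) (p := 2) two_ne_zero

lemma eLpNorm_sub_restrict_Ioc_le_of_causal {R : (ℝ → ℝ) → ℝ → ℝ} {G p : ℝ≥0∞} {N : ℝ}
    {u₁ u₂ : ℝ → ℝ} (hcausal : ∀ u, trunc N (R u) = trunc N (R (trunc N u)))
    (hG : eLpNorm (R (trunc N u₁) - R (trunc N u₂)) p timeMeasure
      ≤ G * eLpNorm (trunc N u₁ - trunc N u₂) p timeMeasure) :
    eLpNorm (R u₁ - R u₂) p (volume.restrict (Ioc 0 N))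
      ≤ G * eLpNorm (u₁ - u₂) p (volume.restrict (Ioc 0 N)) := by
  calc eLpNorm (R u₁ - R u₂) p (volume.restrict (Ioc 0 N))
      = eLpNorm (trunc N (R (trunc N u₁) - R (trunc N u₂))) p timeMeasure := by
        rw [← eLpNorm_trunc, trunc_sub, trunc_sub, hcausal u₁, hcausal u₂]
    _ ≤ eLpNorm (R (trunc N u₁) - R (trunc N u₂)) p timeMeasure := eLpNorm_indicator_le _
    _ ≤ G * eLpNorm (trunc N u₁ - trunc N u₂) p timeMeasure := hG
    _ = G * eLpNorm (u₁ - u₂) p (volume.restrict (Ioc 0 N)) := by rw [← trunc_sub, eLpNorm_trunc]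

lemma rmsNorm_le_of_eLpNorm_le {T Γ : ℝ} {v u : ℝ → ℝ} (hΓ : 0 ≤ Γ)
    (hu : eLpNorm u 2 (volume.restrict (Ioc 0 T)) ≠ ∞)
    (h : eLpNorm v 2 (volume.restrict (Ioc 0 T))
      ≤ ENNReal.ofReal Γ * eLpNorm u 2 (volume.restrict (Ioc 0 T))) :
    rmsNorm T v ≤ Γ * rmsNorm T u := by
  have hreal := ENNReal.toReal_mono (ENNReal.mul_ne_top ofReal_ne_top hu) h
  rw [ENNReal.toReal_mul, ENNReal.toReal_ofReal hΓ] at hreal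
  rw [rmsNorm, rmsNorm, mul_div_assoc']
  gcongr

lemma le_of_eventually_le_mul_add {ι : Type*} {l : Filter ι} [l.NeBot] {a b : ℝ≥0∞}
    {f g : ι → ℝ≥0∞} (hf : Tendsto f l (𝓝 1)) (hg : Tendsto g l (𝓝 0))
    (h : ∀ᶠ i in l, a ≤ f i * b + g i) : a ≤ b := by
  have hlim : Tendsto (fun i => f i * b + g i) l (𝓝 b) := by
    simpa using (ENNReal.Tendsto.mul_const hf (Or.inl one_ne_zero)).add hg
  exact ge_of_tendsto hlim h

lemma period_energy_le_of_abs_sub_le {w z e : ℝ → ℝ} {T ε t₀ : ℝ} {G : ℝ≥0∞}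
    (hT : 0 < T) (hε : 0 < ε) (hw : PeriodicOnNonneg w T) (he : PeriodicOnNonneg e T)
    (henergy : ∀ n : ℕ,
      ∫⁻ τ in Ioc 0 (n * T), ‖z τ‖ₑ ^ 2 ≤ G * ∫⁻ τ in Ioc 0 (n * T), ‖e τ‖ₑ ^ 2)
    (hwz : ∀ τ ≥ t₀, |w τ - z τ| ≤ ε) :
    ∫⁻ τ in Ioc 0 T, ‖w τ‖ₑ ^ 2
      ≤ ENNReal.ofReal ((1 + ε) ^ 2) * (G * ∫⁻ τ in Ioc 0 T, ‖e τ‖ₑ ^ 2)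
        + ENNReal.ofReal (ε * (1 + ε) * T) := by
  obtain ⟨k, hk⟩ := exists_nat_ge (t₀ / T)
  obtain ⟨m', hm'⟩ := exists_nat_ge (k / ε)
  set m := m' + 1
  set a := ∫⁻ τ in Ioc 0 T, ‖w τ‖ₑ ^ 2
  set b := ∫⁻ τ in Ioc 0 T, ‖e τ‖ₑ ^ 2
  set window := Ioc ((k : ℝ) * T) ((k + m) * T)
  have hkT : 0 ≤ (k : ℝ) * T := by positivity
  have hw_window : (m : ℝ≥0∞) * a ≤ ENNReal.ofReal (1 + ε) * (∫⁻ τ in window, ‖z τ‖ₑ ^ 2)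
      + ENNReal.ofReal ((1 + ε⁻¹) * ε ^ 2) * volume window := by
    rw [← (hw.comp fun x => ‖x‖ₑ ^ 2).setLIntegral_Ioc_nat_mul hT.le k m]
    refine setLIntegral_enorm_sq_le_of_abs_sub_le measurableSet_Ioc hε fun τ hτ => hwz τ ?_
    exact ((div_le_iff₀ hT).1 hk).trans hτ.1.le
  have hk_le : ((k + m : ℕ) : ℝ≥0∞) ≤ ENNReal.ofReal (1 + ε) * m := by
    rw [← ENNReal.ofReal_natCast, ← ENNReal.ofReal_natCast m, ← ENNReal.ofReal_mul (by positivity)]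
    refine ENNReal.ofReal_le_ofReal ?_
    have := (div_le_iff₀ hε).1 hm'
    push_cast [m]
    nlinarith
  have hz_window : ∫⁻ τ in window, ‖z τ‖ₑ ^ 2 ≤ G * (ENNReal.ofReal (1 + ε) * m * b) :=
    calc ∫⁻ τ in window, ‖z τ‖ₑ ^ 2
        ≤ ∫⁻ τ in Ioc 0 ((k + m : ℕ) * T), ‖z τ‖ₑ ^ 2 :=
          lintegral_mono_set (by push_cast; exact Ioc_subset_Ioc_left hkT)
      _ ≤ G * ∫⁻ τ in Ioc 0 ((k + m : ℕ) * T), ‖e τ‖ₑ ^ 2 := henergy (k + m)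
      _ = G * ((k + m : ℕ) * b) := by
          have h := (he.comp fun x => ‖x‖ₑ ^ 2).setLIntegral_Ioc_nat_mul hT.le 0 (k + m)
          rw [Nat.cast_zero, zero_mul, zero_add] at h
          rw [h]
      _ ≤ G * (ENNReal.ofReal (1 + ε) * m * b) := by gcongr
  have hvol : volume window = m * ENNReal.ofReal T := by
    rw [Real.volume_Ioc, ← ENNReal.ofReal_natCast, ← ENNReal.ofReal_mul (by positivity)]
    congr 1
    ring
  refine (ENNReal.mul_le_mul_iff_right (by simp [m]) (ENNReal.natCast_ne_top m)).1 ?_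
  have hC : (1 + ε⁻¹) * ε ^ 2 = ε * (1 + ε) := by field_simp; ring
  calc (m : ℝ≥0∞) * a
      ≤ ENNReal.ofReal (1 + ε) * (G * (ENNReal.ofReal (1 + ε) * m * b))
        + ENNReal.ofReal ((1 + ε⁻¹) * ε ^ 2) * (m * ENNReal.ofReal T) :=
        hw_window.trans (by rw [hvol]; gcongr)
    _ = _ := by
        rw [hC, ENNReal.ofReal_pow (by positivity),
          ENNReal.ofReal_mul (p := ε * (1 + ε)) (q := T) (by positivity)]
        ring

lemma period_energy_le_of_tendsto {w z e : ℝ → ℝ} {T : ℝ} {G : ℝ≥0∞}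
    (hT : 0 < T) (hw : PeriodicOnNonneg w T) (he : PeriodicOnNonneg e T)
    (henergy : ∀ n : ℕ,
      ∫⁻ τ in Ioc 0 (n * T), ‖z τ‖ₑ ^ 2 ≤ G * ∫⁻ τ in Ioc 0 (n * T), ‖e τ‖ₑ ^ 2)
    (hwz : Tendsto (w - z) atTop (𝓝 0)) :
    ∫⁻ τ in Ioc 0 T, ‖w τ‖ₑ ^ 2 ≤ G * ∫⁻ τ in Ioc 0 T, ‖e τ‖ₑ ^ 2 := by
  have hlim {f : ℝ → ℝ} (hf : Continuous f) :
      Tendsto (fun ε => ENNReal.ofReal (f ε)) (𝓝[>] 0) (𝓝 (ENNReal.ofReal (f 0))) :=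
    ((ENNReal.continuous_ofReal.comp hf).tendsto 0).mono_left nhdsWithin_le_nhds
  have hf : Tendsto (fun ε => ENNReal.ofReal ((1 + ε) ^ 2)) (𝓝[>] 0) (𝓝 1) := by
    convert hlim (f := fun ε => (1 + ε) ^ 2) (by fun_prop)
    norm_num
  have hg : Tendsto (fun ε => ENNReal.ofReal (ε * (1 + ε) * T)) (𝓝[>] 0) (𝓝 0) := by
    simpa using hlim (f := fun ε => ε * (1 + ε) * T) (by fun_prop)
  refine le_of_eventually_le_mul_add hf hg ?_
  filter_upwards [self_mem_nhdsWithin] with ε hε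
  obtain ⟨t₀, ht₀⟩ := Metric.tendsto_atTop.1 hwz ε hε
  refine period_energy_le_of_abs_sub_le (t₀ := t₀) hT hε hw he henergy fun τ hτ => ?_
  simpa [Real.dist_eq] using (ht₀ τ hτ).le

/-- **Lemma 1 (gain bound form)**: for a causal, period-preserving operator `R` with
finite incremental gain `Γ(R)`, the RMS gain over `T`-periodic inputs is bounded by
`Γ(R)`: for all `T`-periodic `u₁, u₂` with asymptotic `T`-periodic outputs `ỹ₁, ỹ₂`,
`‖ỹ₁ − ỹ₂‖_RMS ≤ Γ(R)·‖u₁ − u₂‖_RMS`. -/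
theorem rms_gain_le_incremental_gain
    (R : (ℝ → ℝ) → (ℝ → ℝ)) (Γ : ℝ) (T : ℝ) (hT : 0 < T) (hΓ0 : 0 ≤ Γ)
    (hcausal : ∀ (t : ℝ) (u : ℝ → ℝ), trunc t (R u) = trunc t (R (trunc t u)))
    (hΓ : ∀ u₁ u₂ : ℝ → ℝ, MemLp u₁ 2 timeMeasure → MemLp u₂ 2 timeMeasure →
      eLpNorm (R u₁ - R u₂) 2 timeMeasure
        ≤ ENNReal.ofReal Γ * eLpNorm (u₁ - u₂) 2 timeMeasure)
    (u₁ u₂ ytilde₁ ytilde₂ : ℝ → ℝ)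
    (hu₁per : ∀ t, 0 ≤ t → u₁ (t + T) = u₁ t)
    (hu₂per : ∀ t, 0 ≤ t → u₂ (t + T) = u₂ t)
    (hy₁per : ∀ t, 0 ≤ t → ytilde₁ (t + T) = ytilde₁ t)
    (hy₂per : ∀ t, 0 ≤ t → ytilde₂ (t + T) = ytilde₂ t)
    (hmem₁ : ∀ t : ℝ, MemLp (trunc t u₁) 2 timeMeasure)
    (hmem₂ : ∀ t : ℝ, MemLp (trunc t u₂) 2 timeMeasure)
    (hconv₁ : ∀ ε > (0:ℝ), ∃ t₀ : ℝ, ∀ τ ≥ t₀, |R u₁ τ - ytilde₁ τ| < ε)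
    (hconv₂ : ∀ ε > (0:ℝ), ∃ t₀ : ℝ, ∀ τ ≥ t₀, |R u₂ τ - ytilde₂ τ| < ε) :
    rmsNorm T (ytilde₁ - ytilde₂) ≤ Γ * rmsNorm T (u₁ - u₂) := by
  have hgain (N : ℝ) : eLpNorm (R u₁ - R u₂) 2 (volume.restrict (Ioc 0 N))
      ≤ ENNReal.ofReal Γ * eLpNorm (u₁ - u₂) 2 (volume.restrict (Ioc 0 N)) :=
    eLpNorm_sub_restrict_Ioc_le_of_causal (hcausal N) (hΓ _ _ (hmem₁ N) (hmem₂ N))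
  have hconv {u y : ℝ → ℝ} (h : ∀ ε > (0:ℝ), ∃ t₀ : ℝ, ∀ τ ≥ t₀, |R u τ - y τ| < ε) :
      Tendsto (R u - y) atTop (𝓝 0) :=
    Metric.tendsto_atTop.2 (by simpa [Real.dist_eq] using h)
  refine rmsNorm_le_of_eLpNorm_le hΓ0 ?_ ((ENNReal.pow_le_pow_left_iff two_ne_zero).1 ?_)
  · rw [← eLpNorm_trunc, trunc_sub]
    exact ((hmem₁ T).sub (hmem₂ T)).eLpNorm_ne_top
  · rw [mul_pow, eLpNorm_two_sq, eLpNorm_two_sq]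
    refine period_energy_le_of_tendsto (z := R u₁ - R u₂) hT
      (PeriodicOnNonneg.sub hy₁per hy₂per) (PeriodicOnNonneg.sub hu₁per hu₂per) (fun n => ?_) ?_
    · simpa only [← eLpNorm_two_sq, ← mul_pow] using pow_le_pow_left₀ zero_le (hgain _) 2
    · convert (hconv hconv₂).sub (hconv hconv₁) using 1
      · ext τ
        simp only [Pi.sub_apply]
        ring
      · simp
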